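/- arXiv:1208.2383 — 2 statements merged into one kernel-verified Lean document; each statement's English description precedes it below -/
import Mathlib

section
/- Let D be a finite closed natural-deduction derivation in a system where the only assumption-discharging rule FIX has a single premise equal to its conclusion and side-condition that its immediate subderivation has depth ≥ 1. Define an unfolding procedure that repeatedly removes a bottommost FIX instance and grafts a copy of its immediate subderivation above each leaf that was an assumption discharged by that instance. Then this procedure is productive: for every depth d, after finitely many unfolding steps the tree below depth d stabilizes, so the limit is a well-defined (possibly infinite) tree with the same conclusion in which no FIX instances or open assumptions occur. -/
/-- Abstract natural-deduction derivation trees: axiom leaves, rule nodes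
(non-FIX rule instances, with a list of premises), FIX nodes discharging the
assumption leaves carrying their marker, and marked assumption leaves. -/
inductive DTr (M : Type) : Type
  | axn : DTr M
  | rule : List (DTr M) → DTr M
  | fix : M → DTr M → DTr M
  | assum : M → DTr M

namespace DTr

variable {M : Type} [DecidableEq M]

/-- Graft `G` onto every assumption leaf marked `u` (stopping at FIX nodes
that rebind the marker `u`). -/
def graft (u : M) (G : DTr M) : DTr M → DTr M
  | .axn => .axn
  | .rule ts => .rule (ts.attach.map fun x => graft u G x.1)
  | .fix v D => if v = u then .fix v D else .fix v (graft u G D)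
  | .assum v => if v = u then G else .assum v
decreasing_by
  all_goals simp_wf
  all_goals first
    | (have := List.sizeOf_lt_of_mem x.2; omega)
    | (simp only [DTr.fix.sizeOf_spec]; omega)
    | omega

/-- One step of the unfolding procedure: each bottommost FIX instance
`fix u D₀` is removed and a copy of the whole FIX derivation is grafted onto
every assumption leaf it discharges, i.e. `fix u D₀ ↦ D₀[assumᵘ := fix u D₀]`. -/
def stepD : DTr M → DTr M
  | .axn => .axn
  | .assum v => .assum v
  | .rule ts => .rule (ts.attach.map fun x => stepD x.1)
  | .fix u D => graft u (.fix u D) D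
decreasing_by
  all_goals simp_wf
  all_goals first
    | (have := List.sizeOf_lt_of_mem x.2; omega)
    | (simp only [DTr.fix.sizeOf_spec]; omega)
    | omega

/-- All assumption leaves marked `u` are guarded, i.e. lie strictly below at
least one (non-FIX) rule node. -/
def GuardedTo (u : M) : DTr M → Prop
  | .axn => True
  | .rule _ => True
  | .fix v D => v = u ∨ GuardedTo u D
  | .assum v => v ≠ u

/-- The guardedness condition: every FIX instance guards all assumption
leaves it discharges (the consequence of the side-condition
`depth(D₀) ≥ 1` established by the guardedness proposition). -/
inductive Guarded : DTr M → Prop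
  | axn : Guarded .axn
  | assum (v : M) : Guarded (.assum v)
  | rule {ts : List (DTr M)} : (∀ t ∈ ts, Guarded t) → Guarded (.rule ts)
  | fix {u : M} {D : DTr M} : Guarded D → GuardedTo u D → Guarded (.fix u D)

/-- Closedness: every assumption marker is discharged by an enclosing FIX. -/
inductive Closed : Set M → DTr M → Prop
  | axn (S : Set M) : Closed S .axn
  | assum (S : Set M) (v : M) (h : v ∈ S) : Closed S (.assum v)
  | rule (S : Set M) {ts : List (DTr M)} : (∀ t ∈ ts, Closed S t) → Closed S (.rule ts)
  | fix (S : Set M) {u : M} {D : DTr M} : Closed (insert u S) D → Closed S (.fix u D)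

/-- Truncation of a tree at depth `d`. -/
def trunc : ℕ → DTr M → DTr M
  | 0, _ => .axn
  | _ + 1, .axn => .axn
  | _ + 1, .assum v => .assum v
  | d + 1, .rule ts => .rule (ts.attach.map fun x => trunc d x.1)
  | d + 1, .fix u D => .fix u (trunc d D)
termination_by d _ => d

/-- A tree contains no FIX nodes and no assumption leaves. -/
inductive FixFree : DTr M → Prop
  | axn : FixFree .axn
  | rule {ts : List (DTr M)} : (∀ t ∈ ts, FixFree t) → FixFree (.rule ts)

end DTr

/-!
Unfolding the root FIX instance `fix u D₀` grafts copies of `fix u D₀` only onto assumption leaves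
of `D₀`, and by guardedness every such leaf lies above a rule node. Hence an unfolding step
removes one FIX node from the chain of FIX nodes at the root without creating a new one there,
so after finitely many steps the root is an axiom or a rule node (it cannot be an assumption, as
the derivation stays closed). From then on the root is fixed and the premises unfold
independently, so by induction on `d` each of the finitely many premises eventually has no FIX
node and no assumption above depth `d - 1`. Finally, a tree whose truncation at depth `d` has
neither FIX nodes nor assumptions is left unchanged up to depth `d` by unfolding.
-/

open Filter

namespace DTr

variable {M : Type}

@[elab_as_elim]
theorem ind {motive : DTr M → Prop} (axn : motive .axn)
    (rule : ∀ ts, (∀ t ∈ ts, motive t) → motive (.rule ts))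
    (fix : ∀ u D, motive D → motive (.fix u D))
    (assum : ∀ v, motive (.assum v)) : ∀ D, motive D
  | .axn => axn
  | .rule ts => rule ts fun t _ => ind axn rule fix assum t
  | .fix u D => fix u D (ind axn rule fix assum D)
  | .assum v => assum v

theorem Closed.mono {S S' : Set M} {D : DTr M} (hD : Closed S D) (hS : S ⊆ S') :
    Closed S' D := by
  induction hD generalizing S' with
  | axn => exact .axn S'
  | assum _ v hv => exact .assum S' v (hS hv)
  | rule _ _ ih => exact .rule S' fun t ht => ih t ht hS
  | fix _ _ ih => exact .fix S' (ih (Set.insert_subset_insert hS))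

def rootFixCount : DTr M → ℕ
  | .fix _ D => rootFixCount D + 1
  | _ => 0

@[simp] theorem trunc_zero (D : DTr M) : trunc 0 D = .axn := by rw [trunc]

@[simp] theorem trunc_succ_axn (d : ℕ) : trunc (d + 1) (.axn : DTr M) = .axn := by rw [trunc]

@[simp] theorem trunc_succ_assum (d : ℕ) (v : M) : trunc (d + 1) (.assum v) = .assum v := by
  rw [trunc]

@[simp] theorem trunc_succ_rule (d : ℕ) (ts : List (DTr M)) :
    trunc (d + 1) (.rule ts) = .rule (ts.map (trunc d)) := by
  rw [trunc, List.attach_map_val]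

@[simp] theorem trunc_succ_fix (d : ℕ) (u : M) (D : DTr M) :
    trunc (d + 1) (.fix u D) = .fix u (trunc d D) := by
  rw [trunc]

@[simp] theorem fixFree_rule_iff {ts : List (DTr M)} : FixFree (.rule ts) ↔ ∀ t ∈ ts, FixFree t :=
  ⟨fun h => by cases h; assumption, .rule⟩

@[simp] theorem not_fixFree_fix (u : M) (D : DTr M) : ¬ FixFree (.fix u D) := nofun

@[simp] theorem not_fixFree_assum (v : M) : ¬ FixFree (.assum v : DTr M) := nofun

section Unfolding

variable [DecidableEq M]

@[simp] theorem graft_axn (u : M) (G : DTr M) : graft u G .axn = .axn := by rw [graft]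

@[simp] theorem graft_rule (u : M) (G : DTr M) (ts : List (DTr M)) :
    graft u G (.rule ts) = .rule (ts.map (graft u G)) := by
  rw [graft, List.attach_map_val]

theorem graft_fix (u : M) (G : DTr M) (v : M) (D : DTr M) :
    graft u G (.fix v D) = if v = u then .fix v D else .fix v (graft u G D) := by
  rw [graft]

theorem graft_assum (u : M) (G : DTr M) (v : M) :
    graft u G (.assum v) = if v = u then G else .assum v := by
  rw [graft]

@[simp] theorem stepD_axn : stepD (.axn : DTr M) = .axn := by rw [stepD]

@[simp] theorem stepD_assum (v : M) : stepD (.assum v : DTr M) = .assum v := by rw [stepD]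

@[simp] theorem stepD_rule (ts : List (DTr M)) : stepD (.rule ts) = .rule (ts.map stepD) := by
  rw [stepD, List.attach_map_val]

@[simp] theorem stepD_fix (u : M) (D : DTr M) : stepD (.fix u D) = graft u (.fix u D) D := by
  rw [stepD]

theorem iterate_stepD_axn (n : ℕ) : stepD^[n] (.axn : DTr M) = .axn :=
  Function.iterate_fixed stepD_axn n

theorem iterate_stepD_rule (n : ℕ) (ts : List (DTr M)) :
    stepD^[n] (.rule ts) = .rule (ts.map stepD^[n]) := by
  induction n with
  | zero => simp
  | succ n ih => rw [Function.iterate_succ_apply', ih, stepD_rule, List.map_map,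
      ← Function.iterate_succ']

theorem guardedTo_graft {u w : M} {G D : DTr M} (hG : GuardedTo w G) (hD : GuardedTo w D) :
    GuardedTo w (graft u G D) := by
  induction D using ind with
  | axn => simp [GuardedTo]
  | rule ts _ => simp [GuardedTo]
  | fix v D ih =>
    rw [graft_fix]
    split_ifs
    · exact hD
    · exact hD.imp_right ih
  | assum v =>
    rw [graft_assum]
    split_ifs
    · exact hG
    · exact hD

/-- `hw` forces `D` to be a chain of FIX nodes ending in an assumption leaf, and `hu` says that
this leaf is not an undischarged `u`-leaf. -/
theorem graft_eq_self_of_guardedTo {u w : M} {G D : DTr M} (hu : GuardedTo u D)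
    (hw : ¬ GuardedTo w D) : graft u G D = D := by
  induction D using ind with
  | axn => exact absurd trivial hw
  | rule ts _ => exact absurd trivial hw
  | fix v D ih =>
    simp only [GuardedTo, not_or] at hu hw
    rw [graft_fix]
    split_ifs with hvu
    · rfl
    · rw [ih (hu.resolve_left hvu) hw.2]
  | assum v => rw [graft_assum, if_neg hu]

theorem guarded_graft {u : M} {G D : DTr M} (hG : Guarded G) (hGw : ∀ w, GuardedTo w G)
    (hD : Guarded D) : Guarded (graft u G D) := by
  induction hD with
  | axn => simpa using Guarded.axn
  | assum v =>
    rw [graft_assum]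
    split_ifs
    · exact hG
    · exact .assum v
  | rule _ ih =>
    rw [graft_rule]
    exact .rule (List.forall_mem_map.2 ih)
  | @fix v D hD hv ih =>
    rw [graft_fix]
    split_ifs
    · exact .fix hD hv
    · exact .fix ih (guardedTo_graft (hGw v) hv)

theorem guarded_stepD {D : DTr M} (hD : Guarded D) : Guarded (stepD D) := by
  induction hD with
  | axn => simpa using Guarded.axn
  | assum v => simpa using Guarded.assum v
  | rule _ ih => simpa using Guarded.rule (List.forall_mem_map.2 ih)
  | @fix u D hD hu _ =>
    rw [stepD_fix]
    by_cases hall : ∀ w, GuardedTo w D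
    · exact guarded_graft (.fix hD hu) (fun w => .inr (hall w)) hD
    · obtain ⟨w, hw⟩ := not_forall.1 hall
      rwa [graft_eq_self_of_guardedTo hu hw]

theorem closed_graft {u : M} {G D : DTr M} {S : Set M} (hG : Closed S G)
    (hD : Closed (insert u S) D) : Closed S (graft u G D) := by
  induction D using ind generalizing S with
  | axn => simpa using Closed.axn S
  | rule ts ih =>
    cases hD with
    | rule _ hts =>
      rw [graft_rule]
      exact .rule S (List.forall_mem_map.2 fun t ht => ih t ht hG (hts t ht))
  | fix v D ih =>
    cases hD with
    | fix _ hD =>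
      rw [graft_fix]
      split_ifs with hvu
      · subst hvu
        exact .fix S (by rwa [Set.insert_idem] at hD)
      · refine .fix S (ih (hG.mono (Set.subset_insert v S)) ?_)
        rwa [Set.insert_comm]
  | assum v =>
    cases hD with
    | assum _ _ hv =>
      rw [graft_assum]
      split_ifs with hvu
      · exact hG
      · exact .assum S v (hv.resolve_left hvu)

theorem closed_stepD {S : Set M} {D : DTr M} (hD : Closed S D) : Closed S (stepD D) := by
  induction hD with
  | axn => simpa using Closed.axn _
  | assum S v hv => simpa using Closed.assum S v hv
  | rule S _ ih => simpa using Closed.rule S (List.forall_mem_map.2 ih)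
  | fix S hD _ => simpa using closed_graft (.fix S hD) hD

theorem rootFixCount_graft {u : M} {G D : DTr M} (hu : GuardedTo u D) :
    rootFixCount (graft u G D) = rootFixCount D := by
  induction D using ind with
  | axn => simp
  | rule ts _ => simp [rootFixCount]
  | fix v D ih =>
    rw [graft_fix]
    split_ifs with hvu
    · rfl
    · simp [rootFixCount, ih (hu.resolve_left hvu)]
  | assum v => rw [graft_assum, if_neg hu]

theorem rootFixCount_stepD_fix_lt {u : M} {D : DTr M} (hu : GuardedTo u D) :
    rootFixCount (stepD (.fix u D)) < rootFixCount (.fix u D) := by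
  simp [rootFixCount, rootFixCount_graft hu]

theorem exists_iterate_stepD_eq_axn_or_rule :
    ∀ {D : DTr M}, Guarded D → Closed ∅ D →
      ∃ N, stepD^[N] D = .axn ∨ ∃ ts, stepD^[N] D = .rule ts
  | .axn, _, _ => ⟨0, .inl rfl⟩
  | .rule ts, _, _ => ⟨0, .inr ⟨ts, rfl⟩⟩
  | .assum _, _, .assum _ _ hv => absurd hv (Set.notMem_empty _)
  | .fix u D, hg@(.fix _ hu), hc =>
    have := rootFixCount_stepD_fix_lt hu
    let ⟨N, hN⟩ := exists_iterate_stepD_eq_axn_or_rule (guarded_stepD hg) (closed_stepD hc)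
    ⟨N + 1, hN⟩
termination_by D => rootFixCount D
decreasing_by simpa using this

theorem trunc_stepD_of_fixFree {d : ℕ} {D : DTr M} (hD : FixFree (trunc d D)) :
    trunc d (stepD D) = trunc d D := by
  induction d generalizing D with
  | zero => simp
  | succ d ih =>
    cases D with
    | axn => simp
    | rule ts =>
      simp only [trunc_succ_rule, fixFree_rule_iff, List.forall_mem_map] at hD
      simp only [stepD_rule, trunc_succ_rule, List.map_map]
      exact congrArg rule (List.map_congr_left fun t ht => ih (hD t ht))
    | fix u D => simp at hD
    | assum v => simp at hD

theorem trunc_iterate_stepD_of_fixFree {d : ℕ} {D : DTr M} (hD : FixFree (trunc d D)) (n : ℕ) :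
    trunc d (stepD^[n] D) = trunc d D := by
  induction n with
  | zero => rfl
  | succ n ih => rw [Function.iterate_succ_apply', trunc_stepD_of_fixFree (ih ▸ hD), ih]

theorem eventually_fixFree_trunc_iterate_stepD (d : ℕ) {D : DTr M} (hg : Guarded D)
    (hc : Closed ∅ D) : ∀ᶠ n in atTop, FixFree (trunc d (stepD^[n] D)) := by
  induction d generalizing D with
  | zero => exact .of_forall fun _ => by simp [FixFree.axn]
  | succ d ih =>
    obtain ⟨N, hN⟩ := exists_iterate_stepD_eq_axn_or_rule hg hc
    suffices h : ∀ᶠ k in atTop, FixFree (trunc (d + 1) (stepD^[k] (stepD^[N] D))) by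
      filter_upwards [(tendsto_sub_atTop_nat N).eventually h, eventually_ge_atTop N] with n hn hle
      rwa [← Function.iterate_add_apply, Nat.sub_add_cancel hle] at hn
    have hgN : Guarded (stepD^[N] D) := Function.Iterate.rec _ hg (fun _ => guarded_stepD) N
    have hcN : Closed ∅ (stepD^[N] D) := Function.Iterate.rec _ hc (fun _ => closed_stepD) N
    rcases hN with hN | ⟨ts, hN⟩
    · exact .of_forall fun _ => by simp [hN, iterate_stepD_axn, FixFree.axn]
    · rw [hN] at hgN hcN ⊢
      have hgs : ∀ t ∈ ts, Guarded t := by cases hgN; assumption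
      have hcs : ∀ t ∈ ts, Closed ∅ t := by cases hcN; assumption
      simp only [iterate_stepD_rule, trunc_succ_rule, fixFree_rule_iff, List.forall_mem_map]
      exact (eventually_all_finite ts.finite_toSet).2 fun t ht => ih (hgs t ht) (hcs t ht)

end Unfolding

end DTr

/-- For a finite closed derivation `D` satisfying the
guardedness condition on FIX instances, the unfolding procedure is
productive: for every depth `d` the truncation at depth `d` of the iterated
unfoldings of `D` eventually stabilizes, and the stable truncation contains
no FIX instances and no open assumptions — so the limit is a well-defined
(possibly infinite) completed derivation tree with the same conclusion. -/
theorem stmt5 {M : Type} [DecidableEq M] (D : DTr M)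
    (hg : DTr.Guarded D) (hc : DTr.Closed (∅ : Set M) D) (d : ℕ) :
    ∃ N : ℕ, (∀ m : ℕ, N ≤ m →
        DTr.trunc d (DTr.stepD^[m] D) = DTr.trunc d (DTr.stepD^[N] D)) ∧
      DTr.FixFree (DTr.trunc d (DTr.stepD^[N] D)) := by
  obtain ⟨N, hN⟩ := (DTr.eventually_fixFree_trunc_iterate_stepD d hg hc).exists
  refine ⟨N, fun m hm => ?_, hN⟩
  obtain ⟨k, rfl⟩ := Nat.exists_eq_add_of_le' hm
  rw [Function.iterate_add_apply, DTr.trunc_iterate_stepD_of_fixFree hN]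
end

section
/- Every infinite rewrite sequence in an ARS whose objects carry a natural-number weight (prefix length), such that the set of objects visited is finite, contains a grounded cycle: there exist positions i < j with equal objects at positions i and j, and such that the weight of every object at positions between i and j is greater than or equal to the weight at position i. -/
/-!
Since the weights are well-ordered, infinitely many positions `k` have minimal weight among all
positions `≥ k`. Only finitely many objects are visited, so two such positions `i < j` carry the
same object, and `[i, j]` is a grounded cycle.
-/

open Filter Set

theorem frequently_atTop_isMinOn_Ici {ι α : Type*} [Preorder ι] [IsDirectedOrder ι] [Nonempty ι]
    [LinearOrder α] [WellFoundedLT α] (g : ι → α) :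
    ∃ᶠ k in atTop, IsMinOn g (Ici k) k := by
  refine frequently_atTop.2 fun N => ?_
  have hk : N ≤ Function.argminOn g (Ici N) nonempty_Ici := Function.argminOn_mem g _ _
  exact ⟨_, hk, fun l hl => Function.argminOn_le g (Ici N) (hk.trans hl)⟩

theorem stmt10_general {T : Type*} (w : T → ℕ) (f : ℕ → T) (hfin : (Set.range f).Finite) :
    ∃ i j, i < j ∧ f i = f j ∧ ∀ k, i ≤ k → k ≤ j → w (f i) ≤ w (f k) := by
  have hmin : {k | IsMinOn (w ∘ f) (Ici k) k}.Infinite :=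
    Nat.frequently_atTop_iff_infinite.1 (frequently_atTop_isMinOn_Ici (w ∘ f))
  obtain ⟨i, hi, j, -, hij, hfij⟩ := hmin.exists_lt_map_eq_of_mapsTo (mapsTo_range f _) hfin
  exact ⟨i, j, hij, hfij, fun k hik _ => hi hik⟩

/-- Every infinite rewrite sequence in an ARS whose objects
carry a natural-number weight, and which visits only finitely many objects,
contains a *grounded cycle*: positions `i < j` with equal objects such that
the weight of every object at a position between `i` and `j` is at least the
weight at position `i`. -/
theorem stmt10 {T : Type*} (R : T → T → Prop) (w : T → ℕ) (f : ℕ → T)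
    (hstep : ∀ i, R (f i) (f (i + 1))) (hfin : (Set.range f).Finite) :
    ∃ i j, i < j ∧ f i = f j ∧ ∀ k, i ≤ k → k ≤ j → w (f i) ≤ w (f k) :=
  stmt10_general w f hfin
end
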